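/- arXiv:2202.07887 — 2 statements merged into one kernel-verified Lean document; each statement's English description precedes it below -/
import Mathlib

section
/- Let K be a compact convex set in ℝ^d containing the origin in its interior. Define R_K := ⋃_{k≥1} ⋂_{n≥k} ⋂_{y∈K} { (x,C) ∈ ℝ^d × M_d : y ∈ exp(C/n)(K + x/n) } and T_K := ⋂_{y∈K} { (x,C) ∈ ℝ^d × M_d : −Cy − x ∈ S(K,y) }, where M_d is the space of d×d real matrices, exp is the matrix exponential, and S(K,y) is the supporting cone of K at y. Then T_K is a closed convex cone in ℝ^d × M_d and R_K ⊆ T_K. -/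
open Set Filter Topology Pointwise

noncomputable section

abbrev Euc (d : ℕ) := EuclideanSpace ℝ (Fin d)

abbrev Mat (d : ℕ) := Matrix (Fin d) (Fin d) ℝ

/-- The supporting cone of `K` at `y`: `cl (⋃_{λ>0} λ (K - y))`. -/
def suppCone {d : ℕ} (K : Set (Euc d)) (y : Euc d) : Set (Euc d) :=
  closure (⋃ (l : ℝ) (_ : 0 < l), l • ((fun z => z - y) '' K))

/-- `R_K = ⋃_{k≥1} ⋂_{n≥k} ⋂_{y∈K} {(x,C) : y ∈ exp(C/n)(K + x/n)}`. -/
def RK {d : ℕ} (K : Set (Euc d)) : Set (Euc d × Mat d) :=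
  ⋃ (k : ℕ) (_ : 1 ≤ k), ⋂ (n : ℕ) (_ : k ≤ n), ⋂ y ∈ K,
    {p : Euc d × Mat d | ∃ z ∈ K,
      y = Matrix.toEuclideanLin (NormedSpace.exp ((n : ℝ)⁻¹ • p.2))
            (z + (n : ℝ)⁻¹ • p.1)}

/-- `T_K = ⋂_{y∈K} {(x,C) : −Cy − x ∈ S(K,y)}`. -/
def TK {d : ℕ} (K : Set (Euc d)) : Set (Euc d × Mat d) :=
  ⋂ y ∈ K, {p : Euc d × Mat d | -(Matrix.toEuclideanLin p.2 y) - p.1 ∈ suppCone K y}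

set_option maxHeartbeats 1000000 in
/-- The key matrix limit: `n • (exp(-C/n) - 1) → -C`. -/
lemma matrix_exp_tendsto {d : ℕ} (C : Mat d) :
    Tendsto (fun n : ℕ => (n : ℝ) • (NormedSpace.exp (-((n : ℝ)⁻¹ • C)) - 1))
      atTop (𝓝 (-C)) := by
  letI : SeminormedRing (Mat d) := Matrix.linftyOpSemiNormedRing
  letI : NormedRing (Mat d) := Matrix.linftyOpNormedRing
  letI : NormedAlgebra ℝ (Mat d) := Matrix.linftyOpNormedAlgebra
  have h1 : HasDerivAt (fun t : ℝ => NormedSpace.exp (t • C)) C 0 := by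
    have := hasDerivAt_exp_smul_const (𝕂 := ℝ) C 0
    simp only [zero_smul, NormedSpace.exp_zero, one_mul] at this
    exact this
  have h2 := hasDerivAt_iff_tendsto_slope.mp h1
  have ht : Tendsto (fun n : ℕ => -(n : ℝ)⁻¹) atTop (𝓝[≠] (0 : ℝ)) := by
    rw [tendsto_nhdsWithin_iff]
    constructor
    · simpa using (tendsto_inv_atTop_zero.comp (tendsto_natCast_atTop_atTop (R := ℝ))).neg
    · filter_upwards [eventually_ge_atTop 1] with n hn
      have h0 : (0:ℝ) < (n:ℝ) := by exact_mod_cast hn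
      simp [h0.ne', inv_ne_zero]
  have h3 := (h2.comp ht).neg
  have heq : (fun n : ℕ => (n : ℝ) • (NormedSpace.exp (-((n : ℝ)⁻¹ • C)) - 1))
      = fun n : ℕ => -(slope (fun t : ℝ => NormedSpace.exp (t • C)) 0 (-(n : ℝ)⁻¹)) := by
    funext n
    rw [slope_def_module]
    simp [neg_smul, neg_neg, inv_neg, inv_inv]
  rw [heq]
  exact h3

lemma toEuclideanLin_comp {d : ℕ} (A B : Mat d) (v : Euc d) :
    Matrix.toEuclideanLin A (Matrix.toEuclideanLin B v)
      = Matrix.toEuclideanLin (A * B) v := by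
  simp [Matrix.toEuclideanLin_apply, Matrix.mulVec_mulVec]

lemma toEuclideanLin_one' {d : ℕ} (v : Euc d) :
    Matrix.toEuclideanLin (1 : Mat d) v = v := by
  simp [Matrix.toEuclideanLin_apply, Matrix.one_mulVec]

/-- The linear map `p ↦ -(p.2 y) - p.1`. -/
def Lmap {d : ℕ} (y : Euc d) : (Euc d × Mat d) →ₗ[ℝ] Euc d where
  toFun p := -(Matrix.toEuclideanLin p.2 y) - p.1
  map_add' p q := by
    simp only [Prod.snd_add, Prod.fst_add, map_add, LinearMap.add_apply]
    abel
  map_smul' c p := by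
    simp only [Prod.smul_snd, Prod.smul_fst, map_smul, LinearMap.smul_apply,
      RingHom.id_apply, smul_sub, smul_neg]

/-- The linear map `M ↦ toEuclideanLin M y`. -/
def Mmap {d : ℕ} (y : Euc d) : Mat d →ₗ[ℝ] Euc d where
  toFun M := Matrix.toEuclideanLin M y
  map_add' M N := by simp [map_add]
  map_smul' c M := by simp [map_smul]

lemma unionConvex {d : ℕ} {K : Set (Euc d)} (hKconv : Convex ℝ K) (y : Euc d)
    (hy : y ∈ K) :
    Convex ℝ (⋃ (l : ℝ) (_ : 0 < l), l • ((fun z => z - y) '' K)) := by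
  set S := (fun z => z - y) '' K with hSdef
  have hS : Convex ℝ S := by
    rintro _ ⟨z1, hz1, rfl⟩ _ ⟨z2, hz2, rfl⟩ a b ha hb hab
    refine ⟨a • z1 + b • z2, hKconv hz1 hz2 ha hb hab, ?_⟩
    have h : a • y + b • y = y := by rw [← add_smul, hab, one_smul]
    rw [smul_sub, smul_sub, sub_add_sub_comm, h]
  rintro u hu v hv a b ha hb hab
  simp only [mem_iUnion] at hu hv ⊢
  obtain ⟨l, hl, hu⟩ := hu
  obtain ⟨m, hm, hv⟩ := hv
  obtain ⟨s1, hs1, rfl⟩ := hu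
  obtain ⟨s2, hs2, rfl⟩ := hv
  have hc : 0 < a * l + b * m := by
    rcases lt_or_ge 0 a with ha' | ha'
    · nlinarith
    · have haz : a = 0 := le_antisymm ha' ha
      have hb1 : b = 1 := by linarith
      nlinarith
  set c := a * l + b * m with hcdef
  refine ⟨c, hc, ?_⟩
  rw [mem_smul_set]
  refine ⟨(a * l / c) • s1 + (b * m / c) • s2,
    hS hs1 hs2 (by positivity) (by positivity) (by field_simp; rw [hcdef]), ?_⟩
  rw [smul_add, smul_smul, smul_smul, mul_div_cancel₀ _ hc.ne', mul_div_cancel₀ _ hc.ne']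
  module

lemma unionCone {d : ℕ} {K : Set (Euc d)} (y : Euc d) {c : ℝ} (hc : 0 < c) :
    c • (⋃ (l : ℝ) (_ : 0 < l), l • ((fun z => z - y) '' K))
      ⊆ ⋃ (l : ℝ) (_ : 0 < l), l • ((fun z => z - y) '' K) := by
  rintro _ ⟨u, hu, rfl⟩
  simp only [mem_iUnion] at hu ⊢
  obtain ⟨l, hl, s, hs, rfl⟩ := hu
  exact ⟨c * l, mul_pos hc hl, s, hs, (smul_smul c l s).symm⟩

lemma suppCone_smul {d : ℕ} {K : Set (Euc d)} (y : Euc d) {c : ℝ} (hc : 0 < c) :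
    c • suppCone K y ⊆ suppCone K y := by
  rintro _ ⟨u, hu, rfl⟩
  have h1 : c • u ∈ closure ((c • ·) '' (⋃ (l : ℝ) (_ : 0 < l), l • ((fun z => z - y) '' K))) := by
    apply image_closure_subset_closure_image (continuous_const_smul c)
    exact mem_image_of_mem _ hu
  refine closure_mono ?_ h1
  intro a ha
  rw [Set.image_smul] at ha
  exact unionCone y hc ha

/-- `T_K` is a closed convex cone in `ℝ^d × M_d` and `R_K ⊆ T_K`. -/
theorem RK_subset_TK {d : ℕ} (K : Set (Euc d)) (hKcomp : IsCompact K)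
    (hKconv : Convex ℝ K) (h0 : 0 ∈ interior K) :
    IsClosed (TK K) ∧ Convex ℝ (TK K) ∧
      (∀ c : ℝ, 0 < c → c • TK K ⊆ TK K) ∧ RK K ⊆ TK K := by
  have hTK : TK K = ⋂ y ∈ K, (Lmap y) ⁻¹' (suppCone K y) := rfl
  refine ⟨?_, ?_, ?_, ?_⟩
  · -- closed
    rw [hTK]
    exact isClosed_biInter fun y hy =>
      (isClosed_closure).preimage (Lmap y).continuous_of_finiteDimensional
  · -- convex
    rw [hTK]
    exact convex_iInter fun y => convex_iInter fun hy =>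
      ((unionConvex hKconv y hy).closure).linear_preimage (Lmap y)
  · -- cone
    intro c hc
    rintro _ ⟨p, hp, rfl⟩
    rw [hTK, mem_iInter₂] at hp ⊢
    intro y hy
    have : Lmap y (c • p) = c • Lmap y p := map_smul _ _ _
    rw [Set.mem_preimage, this]
    exact suppCone_smul y hc ⟨_, hp y hy, rfl⟩
  · -- RK ⊆ TK
    intro p hp
    obtain ⟨x, C⟩ := p
    simp only [RK, mem_iUnion, mem_iInter] at hp
    obtain ⟨k, hk1, hk⟩ := hp
    rw [hTK, mem_iInter₂]
    intro y hy
    -- the approximating sequence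
    set w : ℕ → Euc d := fun n =>
      Matrix.toEuclideanLin ((n : ℝ) • (NormedSpace.exp (-((n : ℝ)⁻¹ • C)) - 1)) y - x
      with hwdef
    have hlim : Tendsto w atTop (𝓝 (-(Matrix.toEuclideanLin C y) - x)) := by
      have hcont : Continuous (Mmap y) := (Mmap y).continuous_of_finiteDimensional
      have h1 : Tendsto (fun n : ℕ => Mmap y ((n : ℝ) •
          (NormedSpace.exp (-((n : ℝ)⁻¹ • C)) - 1))) atTop (𝓝 (Mmap y (-C))) :=
        (hcont.tendsto _).comp (matrix_exp_tendsto C)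
      have h2 := h1.sub_const x
      have : Mmap y (-C) = -(Matrix.toEuclideanLin C y) := by
        simp [Mmap, map_neg]
      rw [this] at h2
      exact h2
    have hmem : ∀ᶠ n in atTop, w n ∈
        ⋃ (l : ℝ) (_ : 0 < l), l • ((fun z => z - y) '' K) := by
      filter_upwards [eventually_ge_atTop k] with n hn
      obtain ⟨z, hz, hzy⟩ := hk n hn y hy
      have hn1 : 1 ≤ n := le_trans hk1 hn
      have hnpos : (0:ℝ) < (n:ℝ) := by exact_mod_cast hn1
      set B := (n : ℝ)⁻¹ • C with hB
      have hinv : NormedSpace.exp (-B) * NormedSpace.exp B = 1 := by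
        rw [← Matrix.exp_add_of_commute _ _ ((Commute.refl B).neg_left),
          neg_add_cancel, NormedSpace.exp_zero]
      have hzeq : Matrix.toEuclideanLin (NormedSpace.exp (-B)) y = z + (n:ℝ)⁻¹ • x := by
        rw [hzy, toEuclideanLin_comp, hinv, toEuclideanLin_one']
      have hw : w n = (n : ℝ) • (z - y) := by
        rw [hwdef]
        simp only [map_smul, map_sub, LinearMap.smul_apply, LinearMap.sub_apply]
        rw [hzeq, toEuclideanLin_one']
        rw [smul_sub, smul_add, smul_smul, mul_inv_cancel₀ hnpos.ne', one_smul]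
        module
      simp only [mem_iUnion]
      exact ⟨(n:ℝ), hnpos, by rw [hw]; exact ⟨z - y, ⟨z, hz, rfl⟩, rfl⟩⟩
    exact mem_closure_of_tendsto hlim hmem
end
end

section
/- Let L and L_n, n ∈ ℕ, be closed convex subsets of ℝ^d containing the origin. Assume that dom(L_n) = dom(L) for all n, that this common set dom(L) is closed, and that h(L_n, u) → h(L, u) as n → ∞ uniformly over u ∈ dom(L) ∩ S^{d−1}. Then the polar sets L_n° converge to L° in the Painlevé–Kuratowski sense. -/
open Set Filter Topology Pointwise

noncomputable section

/-- The support function `h(L,u) = sup { ⟨x,u⟩ : x ∈ L }` (as a real number,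
meaningful on `dom L`). -/
def suppFn {d : ℕ} (L : Set (Euc d)) (u : Euc d) : ℝ :=
  sSup ((fun x => (inner ℝ x u : ℝ)) '' L)

/-- The (barrier) domain `dom L = { u : h(L,u) < ∞ }` of the support function. -/
def sdom {d : ℕ} (L : Set (Euc d)) : Set (Euc d) :=
  {u | BddAbove ((fun x => (inner ℝ x u : ℝ)) '' L)}

/-- The polar set `L° = { x : ⟨x,y⟩ ≤ 1 ∀ y ∈ L }`. -/
def polarSet {d : ℕ} (L : Set (Euc d)) : Set (Euc d) :=
  {x | ∀ y ∈ L, (inner ℝ x y : ℝ) ≤ 1}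

/-- The lower limit of a sequence of sets. -/
def setLimInf {d : ℕ} (F : ℕ → Set (Euc d)) : Set (Euc d) :=
  {x | ∃ f : ℕ → Euc d, (∀ n, f n ∈ F n) ∧ Tendsto f atTop (nhds x)}

/-- The upper limit of a sequence of sets. -/
def setLimSup {d : ℕ} (F : ℕ → Set (Euc d)) : Set (Euc d) :=
  {x | ∃ φ : ℕ → ℕ, StrictMono φ ∧
    ∃ f : ℕ → Euc d, (∀ k, f k ∈ F (φ k)) ∧ Tendsto f atTop (nhds x)}

/-- Painlevé–Kuratowski convergence of a sequence of sets. -/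
def PKConv {d : ℕ} (F : ℕ → Set (Euc d)) (F₀ : Set (Euc d)) : Prop :=
  setLimSup F = F₀ ∧ setLimInf F = F₀

lemma suppFn_homog {d : ℕ} (L : Set (Euc d)) (u : Euc d) {t : ℝ} (ht : 0 ≤ t) :
    suppFn L (t • u) = t * suppFn L u := by
  unfold suppFn
  have h1 : ((fun x => (inner ℝ x (t • u) : ℝ)) '' L)
      = t • ((fun x => (inner ℝ x u : ℝ)) '' L) := by
    rw [← Set.image_smul, Set.image_image]
    apply Set.image_congr'
    intro x
    rw [real_inner_smul_right]; rfl
  rw [h1, Real.sSup_smul_of_nonneg ht, smul_eq_mul]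

lemma suppFn_zero {d : ℕ} {L : Set (Euc d)} (hL : L.Nonempty) : suppFn L 0 = 0 := by
  unfold suppFn
  have : ((fun x => (inner ℝ x (0 : Euc d) : ℝ)) '' L) = {0} := by
    simp [Set.Nonempty.image_const, hL]
  rw [this, csSup_singleton]

lemma sdom_smul_mem {d : ℕ} {L : Set (Euc d)} {u : Euc d} (hu : u ∈ sdom L)
    {t : ℝ} (ht : 0 ≤ t) : t • u ∈ sdom L := by
  obtain ⟨c, hc⟩ := hu
  refine ⟨t * c, ?_⟩
  rintro _ ⟨x, hx, rfl⟩
  show (inner ℝ x (t • u) : ℝ) ≤ t * c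
  rw [real_inner_smul_right]
  exact mul_le_mul_of_nonneg_left (hc (mem_image_of_mem _ hx)) ht

lemma mem_polar_iff {d : ℕ} {L : Set (Euc d)} (h0 : (0 : Euc d) ∈ L) (x : Euc d) :
    x ∈ polarSet L ↔ x ∈ sdom L ∧ suppFn L x ≤ 1 := by
  constructor
  · intro h
    have hb : BddAbove ((fun y => (inner ℝ y x : ℝ)) '' L) := by
      refine ⟨1, ?_⟩
      rintro _ ⟨y, hy, rfl⟩
      show (inner ℝ y x : ℝ) ≤ 1
      rw [real_inner_comm]; exact h y hy
    refine ⟨hb, csSup_le ⟨_, mem_image_of_mem _ h0⟩ ?_⟩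
    rintro _ ⟨y, hy, rfl⟩
    show (inner ℝ y x : ℝ) ≤ 1
    rw [real_inner_comm]; exact h y hy
  · rintro ⟨hb, hs⟩ y hy
    rw [real_inner_comm]
    exact (le_csSup hb (mem_image_of_mem _ hy)).trans hs

/-- If closed convex sets `L_n ∋ 0` have the same closed domain as `L ∋ 0` and
their support functions converge uniformly on `dom(L) ∩ S^{d-1}` to that of `L`,
then `L_n° → L°` in the Painlevé–Kuratowski sense. -/
theorem pkconv_polar_of_uniform_suppFn {d : ℕ} (L : ℕ → Set (Euc d))
    (L₀ : Set (Euc d))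
    (hLcl : ∀ n, IsClosed (L n)) (hLconv : ∀ n, Convex ℝ (L n))
    (hL0 : ∀ n, (0 : Euc d) ∈ L n)
    (hL₀cl : IsClosed L₀) (hL₀conv : Convex ℝ L₀) (hL₀0 : (0 : Euc d) ∈ L₀)
    (hdom : ∀ n, sdom (L n) = sdom L₀) (hdomcl : IsClosed (sdom L₀))
    (hunif : TendstoUniformlyOn (fun n u => suppFn (L n) u) (suppFn L₀) atTop
      (sdom L₀ ∩ Metric.sphere 0 1)) :
    PKConv (fun n => polarSet (L n)) (polarSet L₀) := by
  -- uniform bound on all of sdom L₀ via homogeneity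
  have keyA : ∀ ε > (0:ℝ), ∀ᶠ n in atTop, ∀ x ∈ sdom L₀,
      |suppFn (L n) x - suppFn L₀ x| ≤ ε * ‖x‖ := by
    intro ε hε
    filter_upwards [Metric.tendstoUniformlyOn_iff.1 hunif ε hε] with n hn
    intro x hx
    by_cases hx0 : x = 0
    · subst hx0
      rw [suppFn_zero ⟨0, hL0 n⟩, suppFn_zero ⟨0, hL₀0⟩]
      simp
    · have hnx : (0:ℝ) < ‖x‖ := norm_pos_iff.2 hx0
      set u : Euc d := ‖x‖⁻¹ • x with hu_def
      have huD : u ∈ sdom L₀ := sdom_smul_mem hx (by positivity)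
      have huS : u ∈ Metric.sphere (0 : Euc d) 1 := by
        rw [mem_sphere_zero_iff_norm, hu_def, norm_smul, norm_inv, norm_norm,
          inv_mul_cancel₀ hnx.ne']
      have h1 := hn u ⟨huD, huS⟩
      have hxeq : x = ‖x‖ • u := by
        rw [hu_def, smul_smul, mul_inv_cancel₀ hnx.ne', one_smul]
      have e1 : suppFn (L n) x = ‖x‖ * suppFn (L n) u := by
        conv_lhs => rw [hxeq]
        exact suppFn_homog _ _ (norm_nonneg x)
      have e2 : suppFn L₀ x = ‖x‖ * suppFn L₀ u := by
        conv_lhs => rw [hxeq]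
        exact suppFn_homog _ _ (norm_nonneg x)
      rw [e1, e2, ← mul_sub, abs_mul, abs_of_nonneg (norm_nonneg x), mul_comm ε ‖x‖]
      refine mul_le_mul_of_nonneg_left ?_ (norm_nonneg x)
      rw [abs_sub_comm]
      rw [Real.dist_eq] at h1
      exact h1.le
  -- pointwise convergence on sdom L₀
  have keyB : ∀ x ∈ sdom L₀,
      Tendsto (fun n => suppFn (L n) x) atTop (𝓝 (suppFn L₀ x)) := by
    intro x hx
    rw [Metric.tendsto_atTop]
    intro ε hε
    have hpos : (0:ℝ) < ε / (‖x‖ + 1) := by positivity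
    obtain ⟨N, hN⟩ := (keyA _ hpos).exists_forall_of_atTop
    refine ⟨N, fun n hn => ?_⟩
    have := hN n hn x hx
    rw [Real.dist_eq]
    calc |suppFn (L n) x - suppFn L₀ x| ≤ ε / (‖x‖ + 1) * ‖x‖ := this
      _ < ε / (‖x‖ + 1) * (‖x‖ + 1) := by
          exact mul_lt_mul_of_pos_left (lt_add_one _) hpos
      _ = ε := by field_simp
  -- limsup ⊆ polar L₀
  have hsub1 : setLimSup (fun n => polarSet (L n)) ⊆ polarSet L₀ := by
    rintro x ⟨φ, hφ, f, hf, hft⟩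
    intro y hy
    have hlim : Tendsto (fun k => (inner ℝ (f k) y : ℝ)) atTop (𝓝 (inner ℝ x y : ℝ)) :=
      hft.inner tendsto_const_nhds
    have key : ∀ ε > (0:ℝ), (inner ℝ x y : ℝ) ≤ 1 + ε := by
      intro ε hε
      have hpos : (0:ℝ) < ε / (‖x‖ + 1) := by positivity
      have hev1 : ∀ᶠ k in atTop, ‖f k‖ < ‖x‖ + 1 :=
        (hft.norm).eventually_lt_const (lt_add_one _)
      have hev2 : ∀ᶠ k in atTop, ∀ z ∈ sdom L₀,
          |suppFn (L (φ k)) z - suppFn L₀ z| ≤ ε / (‖x‖ + 1) * ‖z‖ :=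
        hφ.tendsto_atTop.eventually (keyA _ hpos)
      refine le_of_tendsto hlim ?_
      filter_upwards [hev1, hev2] with k h1 h2
      have hfk := (mem_polar_iff (hL0 (φ k)) (f k)).1 (hf k)
      have hfkD : f k ∈ sdom L₀ := by rw [← hdom (φ k)]; exact hfk.1
      have hb1 : (inner ℝ (f k) y : ℝ) ≤ suppFn L₀ (f k) := by
        rw [real_inner_comm]
        exact le_csSup hfkD (mem_image_of_mem _ hy)
      have hb2 : suppFn L₀ (f k) ≤ suppFn (L (φ k)) (f k) + ε / (‖x‖ + 1) * ‖f k‖ := by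
        have := h2 (f k) hfkD
        have := abs_le.1 this
        linarith [this.1]
      have hb3 : ε / (‖x‖ + 1) * ‖f k‖ ≤ ε := by
        calc ε / (‖x‖ + 1) * ‖f k‖ ≤ ε / (‖x‖ + 1) * (‖x‖ + 1) :=
              mul_le_mul_of_nonneg_left h1.le hpos.le
          _ = ε := by field_simp
      linarith [hfk.2]
    by_contra h
    push_neg at h
    obtain ⟨ε, hε, hε2⟩ := exists_between h
    exact absurd (key (ε - 1) (by linarith)) (by linarith)
  -- polar L₀ ⊆ liminf
  have hsub2 : polarSet L₀ ⊆ setLimInf (fun n => polarSet (L n)) := by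
    intro x hx
    obtain ⟨hxD, hxS⟩ := (mem_polar_iff hL₀0 x).1 hx
    set c : ℕ → ℝ := fun n => max (suppFn (L n) x) 1 with hc_def
    have hc1 : ∀ n, (1:ℝ) ≤ c n := fun n => le_max_right _ _
    have hcpos : ∀ n, (0:ℝ) < c n := fun n => lt_of_lt_of_le one_pos (hc1 n)
    have hct : Tendsto c atTop (𝓝 1) := by
      have := (keyB x hxD).max (tendsto_const_nhds (x := (1:ℝ)))
      rwa [max_eq_right hxS] at this
    refine ⟨fun n => (c n)⁻¹ • x, fun n => ?_, ?_⟩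
    · rw [mem_polar_iff (hL0 n)]
      constructor
      · rw [hdom n]
        exact sdom_smul_mem hxD (by positivity)
      · rw [suppFn_homog _ _ (inv_nonneg.2 (hcpos n).le)]
        calc (c n)⁻¹ * suppFn (L n) x ≤ (c n)⁻¹ * c n :=
              mul_le_mul_of_nonneg_left (le_max_left _ _) (by positivity)
          _ = 1 := inv_mul_cancel₀ (hcpos n).ne'
    · have h1 : Tendsto (fun n => (c n)⁻¹) atTop (𝓝 (1:ℝ)⁻¹) := hct.inv₀ one_ne_zero
      have := h1.smul_const x
      rwa [inv_one, one_smul] at this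
  have hsub3 : setLimInf (fun n => polarSet (L n)) ⊆ setLimSup (fun n => polarSet (L n)) := by
    rintro x ⟨f, hf, hft⟩
    exact ⟨id, strictMono_id, f, hf, hft⟩
  constructor
  · exact Subset.antisymm hsub1 (fun x hx => hsub3 (hsub2 hx))
  · exact Subset.antisymm (fun x hx => hsub1 (hsub3 hx)) hsub2
end
end
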